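/- arXiv:1301.3600 — 2 statements merged into one kernel-verified Lean document; each statement's English description precedes it below -/
import Mathlib

section
/- Let (ω, u) be a one-dimensional scattering resonance pair on [0,L] with Im ω < 0 and Re ω ≠ 0. Then |Im ω| = (|u(0)|² + |u(L)|²) / (2 ∫₀ᴸ n²|u|²). -/
open MeasureTheory intervalIntegral Complex

/-!
The flux `W = Im (conj u * u')` satisfies `W' = -Im (ω²) n² |u|²` by the equation, while the
outgoing conditions give `W L - W 0 = Re ω (|u 0|² + |u L|²)`. Integrating, and using
`Im (ω²) = 2 Re ω Im ω`, yields `-2 Im ω ∫ n² |u|² = |u 0|² + |u L|²` after cancelling `Re ω`.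
-/

open Set Filter Topology ComplexConjugate

theorem HasDerivAt.mul_of_eq_zero {𝕜 𝔸 : Type*} [NontriviallyNormedField 𝕜] [NormedRing 𝔸]
    [NormedAlgebra 𝕜 𝔸] {f g : 𝕜 → 𝔸} {f' : 𝔸} {x : 𝕜} (hf : HasDerivAt f f' x)
    (hfx : f x = 0) (hg : ContinuousAt g x) :
    HasDerivAt (fun y => f y * g y) (f' * g x) x := by
  rw [hasDerivAt_iff_tendsto_slope] at hf ⊢
  refine (hf.mul (hg.tendsto.mono_left nhdsWithin_le_nhds)).congr fun y => ?_
  simp only [slope_def_module, hfx, zero_mul, sub_zero, smul_mul_assoc]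

theorem HasDerivAt.complex_im {f : ℝ → ℂ} {f' : ℂ} {x : ℝ} (hf : HasDerivAt f f' x) :
    HasDerivAt (fun y => (f y).im) f'.im x :=
  imCLM.hasFDerivAt.comp_hasDerivAt x hf

theorem hasDerivAt_im_conj_mul_of_deriv_deriv_add_mul_eq_zero {u g : ℝ → ℂ} {k : ℂ} {x : ℝ}
    (hk : k ≠ 0) (hu : HasDerivAt u (g x) x) (hg : g =ᶠ[𝓝 x] deriv u) (hgx : ContinuousAt g x)
    (hODE : deriv (deriv u) x + k * u x = 0) :
    HasDerivAt (fun y => (conj (u y) * g y).im) (-k.im * ‖u x‖ ^ 2) x := by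
  have hconj : HasDerivAt (fun y => conj (u y)) (conj (g x)) x := hu.star
  by_cases hD : DifferentiableAt ℝ (deriv u) x
  · have hg' : HasDerivAt g (-(k * u x)) x := by
      rw [← eq_neg_of_add_eq_zero_left hODE]
      exact hD.hasDerivAt.congr_of_eventuallyEq hg
    convert (hconj.fun_mul hg').complex_im using 1
    rw [conj_mul', mul_neg, mul_left_comm, conj_mul', ← ofReal_pow, ← ofReal_pow, add_im, neg_im,
      ofReal_im, im_mul_ofReal]
    ring
  · -- `deriv (deriv u) x` is the junk value `0`, so the equation forces `u x = 0`.
    have hux : u x = 0 := by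
      rw [deriv_zero_of_not_differentiableAt hD, zero_add] at hODE
      exact (mul_eq_zero.1 hODE).resolve_left hk
    convert (hconj.mul_of_eq_zero (by simp [hux]) hgx).complex_im using 1
    rw [hux, conj_mul', ← ofReal_pow, ofReal_im]
    simp

theorem hasDerivAt_im_conj_mul_derivWithin {u : ℝ → ℂ} {a b x : ℝ} {k : ℂ}
    (hu : ContDiffOn ℝ 1 u (Icc a b)) (hx : x ∈ Ioo a b) (hk : k ≠ 0)
    (hODE : deriv (deriv u) x + k * u x = 0) :
    HasDerivAt (fun y => (conj (u y) * derivWithin u (Icc a b) y).im) (-k.im * ‖u x‖ ^ 2) x := by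
  have hIcc : Icc a b ∈ 𝓝 x := Icc_mem_nhds hx.1 hx.2
  refine hasDerivAt_im_conj_mul_of_deriv_deriv_add_mul_eq_zero hk ?_ ?_ ?_ hODE
  · rw [derivWithin_of_mem_nhds hIcc]
    exact ((hu.differentiableOn one_ne_zero x (Ioo_subset_Icc_self hx)).differentiableAt
      hIcc).hasDerivAt
  · filter_upwards [isOpen_Ioo.mem_nhds hx] with y hy
    exact derivWithin_of_mem_nhds (Icc_mem_nhds hy.1 hy.2)
  · exact (hu.continuousOn_derivWithin (uniqueDiffOn_Icc (hx.1.trans hx.2)) le_rfl).continuousAt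
      hIcc

theorem im_conj_mul_derivWithin_of_deriv_eq {u : ℝ → ℂ} {s : Set ℝ} {x : ℝ} {c : ℂ}
    (hc : c ≠ 0) (hs : UniqueDiffWithinAt ℝ s x) (h : deriv u x = c * u x) :
    (conj (u x) * derivWithin u s x).im = c.im * ‖u x‖ ^ 2 := by
  by_cases hux : u x = 0
  · simp [hux]
  have hd : DifferentiableAt ℝ u x := by
    by_contra hnd
    rw [deriv_zero_of_not_differentiableAt hnd] at h
    exact mul_ne_zero hc hux h.symm
  rw [hd.derivWithin hs, h, mul_left_comm, conj_mul', ← ofReal_pow, im_mul_ofReal]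

theorem ContinuousOn.volume_Ioo_inter_preimage_pos {E : Type*} [TopologicalSpace E]
    {u : ℝ → E} {a b : ℝ} {t : Set E} (hab : a < b) (hu : ContinuousOn u (Icc a b))
    (ht : IsOpen t) (hne : ∃ x ∈ Icc a b, u x ∈ t) : 0 < volume (Ioo a b ∩ u ⁻¹' t) := by
  refine ((hu.mono Ioo_subset_Icc_self).isOpen_inter_preimage isOpen_Ioo ht).measure_pos _ ?_
  obtain ⟨V, hV, hVu⟩ := continuousOn_iff'.1 hu t ht
  obtain ⟨x, hx, hxt⟩ := hne
  have : (closure (Ioo a b) ∩ V).Nonempty := by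
    rw [closure_Ioo hab.ne]
    exact ⟨x, hx, (hVu.subset ⟨hxt, hx⟩).1⟩
  obtain ⟨y, hy, hyV⟩ := (closure_inter_open_nonempty_iff hV).1 this
  exact ⟨y, hy, (hVu.symm.subset ⟨hyV, Ioo_subset_Icc_self hy⟩).1⟩

theorem stmt_2_general
    (L nminus nplus : ℝ) (hL : 0 < L)
    (n : ℝ → ℝ)
    (hnm : 0 < nminus)
    (hbounds : ∀ x ∈ Set.Icc (0:ℝ) L, nminus ≤ n x ∧ n x ≤ nplus)
    (ω : ℂ) (hIm : ω.im < 0) (hRe : ω.re ≠ 0)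
    (u : ℝ → ℂ)
    (hu_C1 : ContDiffOn ℝ 1 u (Set.Icc 0 L))
    (hu_ne : ∃ x ∈ Set.Icc (0:ℝ) L, u x ≠ 0)
    (hODE : ∀ x ∈ Set.Ioo (0:ℝ) L,
      deriv (deriv u) x + ω ^ 2 * ((n x : ℂ)) ^ 2 * u x = 0)
    (hBC0 : deriv u 0 = -Complex.I * ω * u 0)
    (hBCL : deriv u L = Complex.I * ω * u L) :
    |ω.im| = (‖u 0‖ ^ 2 + ‖u L‖ ^ 2)
      / (2 * ∫ x in (0:ℝ)..L, (n x) ^ 2 * ‖u x‖ ^ 2) := by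
  have hω : ω ≠ 0 := fun h => by simp [h] at hIm
  have hn : ∀ x ∈ Icc 0 L, 0 < n x := fun x hx => hnm.trans_le (hbounds x hx).1
  have hω2 : (ω ^ 2).im = 2 * ω.re * ω.im := by rw [sq, mul_im]; ring
  have hω2_ne : (ω ^ 2).im ≠ 0 := by rw [hω2]; exact mul_ne_zero (by simpa) hIm.ne
  set W : ℝ → ℝ := fun y => (conj (u y) * derivWithin u (Icc 0 L) y).im
  -- Rescaled so that its derivative is the nonnegative `n² |u|²`, which is therefore integrable.
  have hW : ∀ x ∈ Ioo 0 L,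
      HasDerivAt (fun y => -((ω ^ 2).im)⁻¹ * W y) (n x ^ 2 * ‖u x‖ ^ 2) x := by
    intro x hx
    have hnx := (hn x (Ioo_subset_Icc_self hx)).ne'
    refine ((hasDerivAt_im_conj_mul_derivWithin hu_C1 hx (by simp [hω, hnx])
      (hODE x hx)).const_mul (-((ω ^ 2).im)⁻¹)).congr_deriv ?_
    rw [← ofReal_pow, im_mul_ofReal]
    field_simp
  have hW_cont : ContinuousOn (fun y => -((ω ^ 2).im)⁻¹ * W y) (Icc 0 L) :=
    continuousOn_const.mul (continuous_im.comp_continuousOn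
      ((continuous_conj.comp_continuousOn hu_C1.continuousOn).mul
        (hu_C1.continuousOn_derivWithin (uniqueDiffOn_Icc hL) le_rfl)))
  have hint : IntervalIntegrable (fun x => n x ^ 2 * ‖u x‖ ^ 2) volume 0 L :=
    (intervalIntegrable_iff_integrableOn_Ioc_of_le hL.le).2
      (integrableOn_deriv_of_nonneg hW_cont hW fun _ _ => by positivity)
  have hFTC := integral_eq_sub_of_hasDerivAt_of_le hL.le hW_cont hW hint
  have hW0 : W 0 = -ω.re * ‖u 0‖ ^ 2 :=
    (im_conj_mul_derivWithin_of_deriv_eq (by simpa)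
      (uniqueDiffOn_Icc hL 0 (left_mem_Icc.2 hL.le)) hBC0).trans (by simp)
  have hWL : W L = ω.re * ‖u L‖ ^ 2 :=
    (im_conj_mul_derivWithin_of_deriv_eq (by simpa)
      (uniqueDiffOn_Icc hL L (right_mem_Icc.2 hL.le)) hBCL).trans (by simp)
  have hpos : 0 < ∫ x in (0:ℝ)..L, n x ^ 2 * ‖u x‖ ^ 2 := by
    refine (integral_pos_iff_support_of_nonneg_ae' (ae_of_all _ fun _ => by positivity) hint).2
      ⟨hL, ?_⟩
    have hsupp := hu_C1.continuousOn.volume_Ioo_inter_preimage_pos hL isOpen_compl_singleton hu_ne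
    refine hsupp.trans_le (measure_mono fun x hx => ⟨?_, Ioo_subset_Ioc_self hx.1⟩)
    exact mul_ne_zero (pow_ne_zero _ (hn x (Ioo_subset_Icc_self hx.1)).ne') (by simpa using hx.2)
  rw [abs_of_neg hIm, eq_div_iff (mul_pos two_pos hpos).ne', hFTC, hW0, hWL, hω2]
  field_simp [hIm.ne]
  ring

theorem stmt_2
    (L nminus nplus : ℝ) (hL : 0 < L)
    (n : ℝ → ℝ) (hn_meas : Measurable n)
    (hnm : 0 < nminus)
    (hbounds : ∀ x ∈ Set.Icc (0:ℝ) L, nminus ≤ n x ∧ n x ≤ nplus)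
    (ω : ℂ) (hIm : ω.im < 0) (hRe : ω.re ≠ 0)
    (u : ℝ → ℂ)
    (hu_C1 : ContDiffOn ℝ 1 u (Set.Icc 0 L))
    (hu_ne : ∃ x ∈ Set.Icc (0:ℝ) L, u x ≠ 0)
    (hODE : ∀ x ∈ Set.Ioo (0:ℝ) L,
      deriv (deriv u) x + ω ^ 2 * ((n x : ℂ)) ^ 2 * u x = 0)
    (hBC0 : deriv u 0 = -Complex.I * ω * u 0)
    (hBCL : deriv u L = Complex.I * ω * u L) :
    |ω.im| = (‖u 0‖ ^ 2 + ‖u L‖ ^ 2)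
      / (2 * ∫ x in (0:ℝ)..L, (n x) ^ 2 * ‖u x‖ ^ 2) :=
  stmt_2_general L nminus nplus hL n hnm hbounds ω hIm hRe u hu_C1 hu_ne hODE hBC0 hBCL
end

section
/- Let n : ℝ → ℝ be continuous with n(L - x) = n(x), and let (ω, u) be a scattering resonance pair on [0,L]: u ∈ C²([0,L],ℂ) nontrivial solving u'' + ω² n² u = 0 with u'(0) = -iω u(0), u'(L) = iω u(L). Then either u(L-x) = u(x) for all x ∈ [0,L] or u(L-x) = -u(x) for all x ∈ [0,L]. -/
/-!
Reflecting a solution through the midpoint gives another solution, because the refractive index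
is symmetric. The combination `u 0 * u (L - x) - u L * u x` therefore solves the same equation, and
the two radiation conditions make both it and its derivative vanish at `0`; by uniqueness for the
initial value problem it vanishes identically. Since `u 0 ≠ 0` (again by uniqueness, as `u` is
nontrivial), `u (L - x) = k * u x` for a constant `k`, and reflecting twice gives `k ^ 2 = 1`.
-/

open Set

def HelmholtzOn (c : ℝ → ℂ) (s : Set ℝ) (f : ℝ → ℂ) : Prop :=
  ∀ x ∈ s, deriv (deriv f) x + c x * f x = 0

theorem deriv_deriv_comp_const_sub (f : ℝ → ℂ) (a x : ℝ) :
    deriv (deriv fun y => f (a - y)) x = deriv (deriv f) (a - x) := by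
  have hd : (deriv fun y => f (a - y)) = fun y => -deriv f (a - y) :=
    funext fun y => deriv_comp_const_sub f a y
  rw [hd, deriv.fun_neg, deriv_comp_const_sub (deriv f), neg_neg]

namespace HelmholtzOn

variable {c f : ℝ → ℂ} {s : Set ℝ}

theorem const_mul (h : HelmholtzOn c s f) (k : ℂ) : HelmholtzOn c s fun x => k * f x := by
  intro x hx
  rw [deriv_const_mul_field', deriv_const_mul_field']
  linear_combination k * h x hx

theorem comp_const_sub (h : HelmholtzOn c s f) {a : ℝ} (hs : MapsTo (a - ·) s s)
    (hc : ∀ x ∈ s, c (a - x) = c x) : HelmholtzOn c s fun x => f (a - x) := by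
  intro x hx
  rw [deriv_deriv_comp_const_sub, ← hc x hx]
  exact h (a - x) (hs hx)

theorem hasDerivAt_phase (h : HelmholtzOn c s f) (hf : ContDiff ℝ 2 f) {x : ℝ} (hx : x ∈ s) :
    HasDerivAt (fun t => (f t, deriv f t)) (deriv f x, -c x * f x) x := by
  have hf'' : deriv (deriv f) x = -c x * f x := by linear_combination h x hx
  refine (hf.differentiable two_ne_zero x).hasDerivAt.prodMk ?_
  exact hf'' ▸ (hf.differentiable_deriv_two x).hasDerivAt

end HelmholtzOn

theorem lipschitzWith_companion (z : ℂ) :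
    LipschitzWith (max 1 ‖z‖₊) fun p : ℂ × ℂ => (p.2, -z * p.1) := by
  refine LipschitzWith.prod_snd.prodMk ?_
  rw [← nnnorm_neg z, ← mul_one ‖-z‖₊]
  exact (lipschitzWith_smul (-z)).comp (LipschitzWith.prod_fst (α := ℂ) (β := ℂ))

theorem HelmholtzOn.eqOn_Icc {a b : ℝ} {c f g : ℝ → ℂ} (hc : ContinuousOn c (Icc a b))
    (hf : HelmholtzOn c (Icc a b) f) (hg : HelmholtzOn c (Icc a b) g)
    (hf2 : ContDiff ℝ 2 f) (hg2 : ContDiff ℝ 2 g)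
    (ha : f a = g a) (ha' : deriv f a = deriv g a) : EqOn f g (Icc a b) := by
  obtain ⟨C, hC⟩ := isCompact_Icc.exists_bound_of_continuousOn hc
  have hv : ∀ t ∈ Icc a b,
      LipschitzOnWith (max 1 C.toNNReal) (fun p : ℂ × ℂ => (p.2, -c t * p.1)) univ := by
    intro t ht
    refine ((lipschitzWith_companion (c t)).weaken ?_).lipschitzOnWith
    exact max_le_max le_rfl (NNReal.le_toNNReal_of_coe_le (hC t ht))
  have hphase : ∀ h : ℝ → ℂ, HelmholtzOn c (Icc a b) h → ContDiff ℝ 2 h →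
      ContinuousOn (fun t => (h t, deriv h t)) (Icc a b) ∧
      ∀ t ∈ Ico a b, HasDerivWithinAt (fun t => (h t, deriv h t))
        (deriv h t, -c t * h t) (Ici t) t := fun h hh hh2 =>
    ⟨(hh2.continuous.prodMk (hh2.continuous_deriv one_le_two)).continuousOn,
      fun t ht => (hh.hasDerivAt_phase hh2 (Ico_subset_Icc_self ht)).hasDerivWithinAt⟩
  have heq := ODE_solution_unique_of_mem_Icc_right (fun t ht => hv t (Ico_subset_Icc_self ht))
    (hphase f hf hf2).1 (hphase f hf hf2).2 (fun _ _ => trivial)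
    (hphase g hg hg2).1 (hphase g hg hg2).2 (fun _ _ => trivial) (Prod.ext ha ha')
  exact fun t ht => congrArg Prod.fst (heq ht)

theorem eq_or_eq_neg_of_mul_comp_eq_mul {α K : Type*} [Field K] {σ : α → α} {s : Set α}
    {f : α → K} {a b : K} (hσ : Function.Involutive σ) (hs : MapsTo σ s s) (ha : a ≠ 0)
    (h : ∀ x ∈ s, a * f (σ x) = b * f x) (hne : ∃ x ∈ s, f x ≠ 0) :
    (∀ x ∈ s, f (σ x) = f x) ∨ (∀ x ∈ s, f (σ x) = -f x) := by
  have hk : ∀ x ∈ s, f (σ x) = b / a * f x := fun x hx => by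
    rw [div_mul_eq_mul_div, eq_div_iff ha, mul_comm, h x hx]
  obtain ⟨x₀, hx₀, hfx₀⟩ := hne
  have hsq : (b / a) ^ 2 = 1 := by
    have := hk (σ x₀) (hs hx₀)
    rw [hσ x₀, hk x₀ hx₀] at this
    exact mul_right_cancel₀ hfx₀ (by linear_combination -this)
  rcases sq_eq_one_iff.mp hsq with h1 | h1
  · exact Or.inl fun x hx => by rw [hk x hx, h1, one_mul]
  · exact Or.inr fun x hx => by rw [hk x hx, h1, neg_one_mul]

theorem stmt_7_general
    (L : ℝ)
    (n : ℝ → ℝ) (hn_cont : Continuous n)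
    (hn_sym : ∀ x : ℝ, n (L - x) = n x)
    (ω : ℂ) (u : ℝ → ℂ)
    (hu_C2 : ContDiff ℝ 2 u)
    (hu_ne : ∃ x ∈ Set.Icc (0:ℝ) L, u x ≠ 0)
    (hODE : ∀ x ∈ Set.Icc (0:ℝ) L,
      deriv (deriv u) x + ω ^ 2 * ((n x : ℂ)) ^ 2 * u x = 0)
    (hBC0 : deriv u 0 = -Complex.I * ω * u 0)
    (hBCL : deriv u L = Complex.I * ω * u L) :
    (∀ x ∈ Set.Icc (0:ℝ) L, u (L - x) = u x)
      ∨ (∀ x ∈ Set.Icc (0:ℝ) L, u (L - x) = -u x) := by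
  set c : ℝ → ℂ := fun x => ω ^ 2 * (n x : ℂ) ^ 2
  have hc : ContinuousOn c (Icc 0 L) := by fun_prop
  have hu : HelmholtzOn c (Icc 0 L) u := hODE
  have hrefl : MapsTo (L - ·) (Icc 0 L) (Icc 0 L) := fun x hx => by
    simp only [mem_Icc] at hx ⊢
    constructor <;> linarith
  have hu0 : u 0 ≠ 0 := by
    intro h0
    obtain ⟨x, hx, hux⟩ := hu_ne
    exact hux (hu.eqOn_Icc hc (fun _ _ => by simp) hu_C2 contDiff_const h0
      (by simp [hBC0, h0]) hx)
  have hv : HelmholtzOn c (Icc 0 L) fun x => u 0 * u (L - x) :=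
    (hu.comp_const_sub hrefl fun x _ => by simp only [c, hn_sym]).const_mul (u 0)
  have key := hv.eqOn_Icc hc (hu.const_mul (u L)) (by fun_prop) (by fun_prop)
    (by simp only [sub_zero, mul_comm])
    (by simp only [deriv_const_mul_field', deriv_comp_const_sub, sub_zero, hBC0, hBCL]; ring)
  exact eq_or_eq_neg_of_mul_comp_eq_mul (σ := (L - ·)) (fun x => sub_sub_cancel L x) hrefl hu0
    key hu_ne

theorem stmt_7
    (L : ℝ) (hL : 0 < L)
    (n : ℝ → ℝ) (hn_cont : Continuous n)
    (hn_sym : ∀ x : ℝ, n (L - x) = n x)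
    (ω : ℂ) (u : ℝ → ℂ)
    (hu_C2 : ContDiff ℝ 2 u)
    (hu_ne : ∃ x ∈ Set.Icc (0:ℝ) L, u x ≠ 0)
    (hODE : ∀ x ∈ Set.Icc (0:ℝ) L,
      deriv (deriv u) x + ω ^ 2 * ((n x : ℂ)) ^ 2 * u x = 0)
    (hBC0 : deriv u 0 = -Complex.I * ω * u 0)
    (hBCL : deriv u L = Complex.I * ω * u L) :
    (∀ x ∈ Set.Icc (0:ℝ) L, u (L - x) = u x)
      ∨ (∀ x ∈ Set.Icc (0:ℝ) L, u (L - x) = -u x) :=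
  stmt_7_general L n hn_cont hn_sym ω u hu_C2 hu_ne hODE hBC0 hBCL
end
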